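/- For ρ00, ρ11 ≥ 0 with ρ00 + ρ11 = 1, p ∈ (0,1), and integer n ≥ 1, the temporal-mode randomness at zero coherence equals exactly R_temp(0) = ρ11·((1−(1−p)ⁿ)/p)·(−p·log₂ p − (1−p)·log₂(1−p)); that is, the temporal lower bound is attained at c = 0. -/

import Mathlib

private lemma pairEnt (a b : ℝ) :
    ((a + b + Real.sqrt ((a - b) ^ 2)) / 2) *
        Real.logb 2 ((a + b + Real.sqrt ((a - b) ^ 2)) / 2)
      + ((a + b - Real.sqrt ((a - b) ^ 2)) / 2) *
        Real.logb 2 ((a + b - Real.sqrt ((a - b) ^ 2)) / 2)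
      = a * Real.logb 2 a + b * Real.logb 2 b := by
  rcases le_total b a with h | h
  · rw [Real.sqrt_sq (by linarith : (0:ℝ) ≤ a - b),
      show (a + b + (a - b)) / 2 = a by ring, show (a + b - (a - b)) / 2 = b by ring]
  · rw [show (a - b) ^ 2 = (b - a) ^ 2 by ring,
      Real.sqrt_sq (by linarith : (0:ℝ) ≤ b - a),
      show (a + b + (b - a)) / 2 = b by ring, show (a + b - (b - a)) / 2 = a by ring]
    ring

private lemma keySplit {p : ℝ} (hp0 : 0 < p) (hp1 : p < 1) {x : ℝ} (hx : 0 ≤ x) :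
    x * Real.logb 2 x - (p * x) * Real.logb 2 (p * x)
      - ((1 - p) * x) * Real.logb 2 ((1 - p) * x)
      = x * (-(p * Real.logb 2 p) - (1 - p) * Real.logb 2 (1 - p)) := by
  have h1p : (0:ℝ) < 1 - p := by linarith
  rcases eq_or_lt_of_le hx with h | h
  · simp [← h]
  · rw [Real.logb_mul hp0.ne' h.ne', Real.logb_mul h1p.ne' h.ne']
    ring

private lemma sumId {p : ℝ} (hp0 : 0 < p) (hp1 : p < 1) {r : ℝ} (hr : 0 ≤ r) (n : ℕ) :
    p * (r * Real.logb 2 r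
      - (∑ k ∈ Finset.Icc 1 n,
          (1 - p) ^ (k - 1) * p * r * Real.logb 2 ((1 - p) ^ (k - 1) * p * r))
      - ((1 - p) ^ n * r) * Real.logb 2 ((1 - p) ^ n * r))
      = r * (1 - (1 - p) ^ n) *
          (-(p * Real.logb 2 p) - (1 - p) * Real.logb 2 (1 - p)) := by
  induction n with
  | zero => simp
  | succ n ih =>
      rw [Finset.sum_Icc_succ_top (by omega : 1 ≤ n + 1)]
      have h1p : (0:ℝ) ≤ 1 - p := by linarith
      have hx : (0:ℝ) ≤ (1 - p) ^ n * r := mul_nonneg (pow_nonneg h1p n) hr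
      have hk := keySplit hp0 hp1 hx
      have e1 : (1 - p) ^ (n + 1 - 1) * p * r = p * ((1 - p) ^ n * r) := by
        simp only [Nat.add_sub_cancel]; ring
      have e2 : (1 - p) ^ (n + 1) * r = (1 - p) * ((1 - p) ^ n * r) := by ring
      rw [e1, e2]
      linear_combination ih + p * hk



/-- The temporal-mode (arrival-time) randomness function `R_temp(c)`
from Eq. (27) of the paper, for `n` time bins with per-bin decay
probability `p`, with entropies in bits (`Real.logb 2`, which satisfies
the convention `0 · log₂ 0 = 0` since `Real.logb 2 0 = 0`). -/
noncomputable def RandTemp (ρ00 ρ11 p : ℝ) (n : ℕ) (c : ℝ) : ℝ :=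
  let η := (1 - p) ^ n
  let Δ := Real.sqrt ((ρ11 - ρ00) ^ 2 + 4 * c ^ 2)
  let S := -(((1 + Δ) / 2) * Real.logb 2 ((1 + Δ) / 2))
           - ((1 - Δ) / 2) * Real.logb 2 ((1 - Δ) / 2)
  let F := ρ00 + η * ρ11
  let Δ' := Real.sqrt ((ρ00 - η * ρ11) ^ 2 + 4 * η * c ^ 2)
  let μ1 := (F + Δ') / 2
  let μ2 := (F - Δ') / 2;
  -S - (∑ k ∈ Finset.Icc 1 n,
          (1 - p) ^ (k - 1) * p * ρ11 * Real.logb 2 ((1 - p) ^ (k - 1) * p * ρ11))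
    - μ1 * Real.logb 2 μ1 - μ2 * Real.logb 2 μ2

/-- at zero coherence the temporal-mode randomness equals the
lower bound exactly:
`R_temp(0) = ρ11 · (1−(1−p)ⁿ)/p · ( −p log₂ p − (1−p) log₂(1−p) )`. -/
theorem randTemp_at_zero (ρ00 ρ11 p : ℝ) (n : ℕ)
    (h00 : 0 ≤ ρ00) (h11 : 0 ≤ ρ11) (hsum : ρ00 + ρ11 = 1)
    (hp0 : 0 < p) (hp1 : p < 1) (hn : 1 ≤ n) :
    RandTemp ρ00 ρ11 p n 0
      = ρ11 * ((1 - (1 - p) ^ n) / p) *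
          (-p * Real.logb 2 p - (1 - p) * Real.logb 2 (1 - p)) := by

  have hp : p ≠ 0 := ne_of_gt hp0
  unfold RandTemp
  simp only []
  have hA : (ρ11 - ρ00) ^ 2 + 4 * (0:ℝ) ^ 2 = (ρ11 - ρ00) ^ 2 := by ring
  have hB : (ρ00 - (1 - p) ^ n * ρ11) ^ 2 + 4 * (1 - p) ^ n * (0:ℝ) ^ 2
      = (ρ00 - (1 - p) ^ n * ρ11) ^ 2 := by ring
  rw [hA, hB]
  have pair1 := pairEnt ρ11 ρ00
  have pair2 := pairEnt ρ00 ((1 - p) ^ n * ρ11)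
  rw [show ρ11 + ρ00 = 1 by linarith] at pair1
  have hs := sumId hp0 hp1 h11 n
  rw [show ρ11 * ((1 - (1 - p) ^ n) / p) *
      (-p * Real.logb 2 p - (1 - p) * Real.logb 2 (1 - p))
    = (ρ11 * (1 - (1 - p) ^ n) *
        (-(p * Real.logb 2 p) - (1 - p) * Real.logb 2 (1 - p))) / p by
      ring]
  rw [← hs, mul_div_cancel_left₀ _ hp]
  linear_combination pair1 - pair2
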